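/- (Identity for marginal-matched tuples, key step in the proof of Theorem 2.) Let (U, X, Z, V) be finitely supported random variables with joint pmf p(u, x, z, v) = p(u|x)·p_{XZ}(x, z)·p(v|z) (Markov chain U–X–Z–V). Let (Ũ, X̃, Z̃, Ṽ) be finitely supported random variables on the same alphabets satisfying (Ũ, X̃) ~ (U, X), (Ṽ, Z̃) ~ (V, Z), and (Ũ, Ṽ) ~ (U, V) (equality of the indicated pairwise distributions). Let (Ū, X̄, Z̄, V̄) be the random variables with joint pmf p(ū, x̄, z̄, v̄) = p_{U|X}(ū|x̄)·p_X(x̄)·p_Z(z̄)·p_{V|Z}(v̄|z̄), i.e., Ū–X̄–Z̄–V̄ with X̄ and Z̄ independent, (X̄, Ū) ~ (X, U) and (Z̄, V̄) ~ (Z, V). Then I((Ũ,Ṽ); (X̃,Z̃)) − I((U,V); (X,Z)) + D(p_{X̃Z̃} ‖ p_X ⊗ p_Z) = D(p_{ŨX̃Z̃Ṽ} ‖ p_{ŪX̄Z̄V̄}) = I((X̃, Ũ); (Z̃, Ṽ)), and this common value is at least I(U; V). -/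

import Mathlib

/-!
Everything reduces to entropies. The tilde tuple has the `(U,X)`, `(Z,V)`, `(U,V)`, `X` and `Z`
marginals of the Markov tuple, and the chain rule for `U – X – Z – V` reads
`H(U,X,Z,V) = H(U,X) + H(X,Z) + H(Z,V) - H(X) - H(Z)`. Substituting, the left-hand side collapses
to `H(U,X) + H(Z,V) - H(Ũ,X̃,Z̃,Ṽ)`, which is both `D(q̃ ‖ p_{UX} ⊗ p_{ZV})` and
`I((X̃,Ũ);(Z̃,Ṽ))`. The lower bound is data processing for mutual information, obtained from data
processing for the Kullback–Leibler divergence (a consequence of `log x ≤ x - 1`), together with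
`I(Ũ;Ṽ) = I(U;V)`.
-/

open scoped BigOperators Classical

namespace Biclustering

variable {α β γ : Type*}

/-- A probability mass function on a finite type. -/
def IsPMF [Fintype α] (p : α → ℝ) : Prop := (∀ a, 0 ≤ p a) ∧ ∑ a, p a = 1

/-- Shannon entropy (in nats) of a pmf on a finite type. -/
noncomputable def ent [Fintype α] (p : α → ℝ) : ℝ := - ∑ a, p a * Real.log (p a)

/-- Pushforward (distribution of `f` under `p`). -/
noncomputable def pmap [Fintype α] (f : α → β) (p : α → ℝ) : β → ℝ :=
  fun b => ∑ a, if f a = b then p a else 0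

/-- Entropy of the random variable `f` under the joint pmf `p`. -/
noncomputable def Hof [Fintype α] [Fintype β] (p : α → ℝ) (f : α → β) : ℝ := ent (pmap f p)

/-- Mutual information `I(f; g)` under the joint pmf `p`. -/
noncomputable def MI [Fintype α] [Fintype β] [Fintype γ] (p : α → ℝ) (f : α → β) (g : α → γ) : ℝ :=
  Hof p f + Hof p g - Hof p (fun a => (f a, g a))

/-- Kullback–Leibler divergence `D(p ‖ q)` (in nats) between pmfs on a finite type. -/
noncomputable def KL [Fintype α] (p q : α → ℝ) : ℝ := ∑ a, p a * Real.log (p a / q a)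

/-- The joint pmf `q` of `(U, X, Z, V)` factors as `p(u|x) · p_{XZ}(x,z) · p(v|z)`,
i.e. the Markov chain `U – X – Z – V` holds with `(X, Z)`-marginal `p`. -/
def LongMarkov {𝒳 𝒵 𝒰 𝒱 : Type} [Fintype 𝒳] [Fintype 𝒵] [Fintype 𝒰] [Fintype 𝒱]
    (p : 𝒳 × 𝒵 → ℝ) (q : 𝒰 × 𝒳 × 𝒵 × 𝒱 → ℝ) : Prop :=
  ∃ (a : 𝒳 → 𝒰 → ℝ) (b : 𝒵 → 𝒱 → ℝ),
    (∀ x u, 0 ≤ a x u) ∧ (∀ x, ∑ u, a x u = 1) ∧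
    (∀ z v, 0 ≤ b z v) ∧ (∀ z, ∑ v, b z v = 1) ∧
    ∀ u x z v, q (u, x, z, v) = a x u * p (x, z) * b z v

section Pushforward

variable [Fintype α]

lemma pmap_nonneg (f : α → β) {r : α → ℝ} (hr : ∀ a, 0 ≤ r a) (b : β) : 0 ≤ pmap f r b :=
  Finset.sum_nonneg fun a _ => by split_ifs <;> simp [hr a]

lemma sum_pmap_mul [Fintype β] (f : α → β) (r : α → ℝ) (φ : β → ℝ) :
    ∑ a, r a * φ (f a) = ∑ b, pmap f r b * φ b := by
  simp only [pmap, Finset.sum_mul, ite_mul, zero_mul]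
  rw [Finset.sum_comm]
  simp

lemma sum_pmap [Fintype β] (f : α → β) (r : α → ℝ) : ∑ b, pmap f r b = ∑ a, r a := by
  simpa using (sum_pmap_mul f r fun _ => 1).symm

lemma le_pmap_apply (f : α → β) {r : α → ℝ} (hr : ∀ a, 0 ≤ r a) (a : α) :
    r a ≤ pmap f r (f a) := by
  unfold pmap
  simpa using Finset.single_le_sum (f := fun a' => if f a' = f a then r a' else 0)
    (fun i _ => by split_ifs <;> simp [hr i]) (Finset.mem_univ a)

lemma pmap_comp [Fintype β] (f : α → β) (g : β → γ) (r : α → ℝ) :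
    pmap g (pmap f r) = pmap (fun a => g (f a)) r := by
  funext c
  simpa [pmap, mul_ite] using (sum_pmap_mul f r fun b => if g b = c then (1 : ℝ) else 0).symm

lemma pmap_comp_of_pmap_eq [Fintype β] {f : α → β} (g : β → γ) {r s : α → ℝ}
    (h : pmap f r = pmap f s) :
    pmap (fun a => g (f a)) r = pmap (fun a => g (f a)) s := by
  rw [← pmap_comp, h, pmap_comp]

lemma pmap_apply_of_injective {f : α → β} (hf : Function.Injective f) (r : α → ℝ) (a : α) :
    pmap f r (f a) = r a := by
  simp [pmap, hf.eq_iff]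

lemma pmap_fst_apply [Fintype β] [Fintype γ] (p : β × γ → ℝ) (b : β) :
    pmap Prod.fst p b = ∑ c, p (b, c) := by
  rw [pmap, Fintype.sum_prod_type, Finset.sum_comm]
  simp

lemma pmap_snd_apply [Fintype β] [Fintype γ] (p : β × γ → ℝ) (c : γ) :
    pmap Prod.snd p c = ∑ b, p (b, c) := by
  simp [pmap, Fintype.sum_prod_type]

lemma pmap_prodMap_mul {δ ε : Type*} [Fintype β] [Fintype γ] (s : β → δ) (t : γ → ε)
    (μ : β → ℝ) (ν : γ → ℝ) :
    pmap (Prod.map s t) (fun bc => μ bc.1 * ν bc.2) = fun de => pmap s μ de.1 * pmap t ν de.2 := by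
  funext de
  simp only [pmap, Finset.sum_mul_sum, Fintype.sum_prod_type, Prod.map, Prod.ext_iff, ite_and,
    ite_mul, mul_ite, zero_mul, mul_zero]
  refine Finset.sum_congr rfl fun b _ => Finset.sum_congr rfl fun c _ => ?_
  split_ifs <;> rfl

end Pushforward

section Entropy

variable [Fintype α] [Fintype β]

lemma ent_pmap_of_injective {f : α → β} (hf : Function.Injective f) (r : α → ℝ) :
    ent (pmap f r) = ent r := by
  unfold ent
  rw [← sum_pmap_mul f r fun b => Real.log (pmap f r b)]
  simp only [pmap_apply_of_injective hf]

lemma Hof_of_injective {f : α → β} (hf : Function.Injective f) (r : α → ℝ) :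
    Hof r f = ent r :=
  ent_pmap_of_injective hf r

lemma Hof_prod_comm [Fintype γ] (r : α → ℝ) (f : α → β) (g : α → γ) :
    Hof r (fun a => (g a, f a)) = Hof r (fun a => (f a, g a)) := by
  rw [Hof, Hof, ← ent_pmap_of_injective Prod.swap_injective, pmap_comp]
  rfl

lemma Hof_eq_of_pmap_eq {f : α → β} {r s : α → ℝ} (h : pmap f r = pmap f s) :
    Hof r f = Hof s f :=
  congrArg ent h

lemma sum_mul_log_pmap (f : α → β) (r : α → ℝ) :
    ∑ a, r a * Real.log (pmap f r (f a)) = - Hof r f := by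
  rw [sum_pmap_mul f r fun b => Real.log (pmap f r b), Hof, ent, neg_neg]

lemma KL_mul_marginals_eq [Fintype γ] {r : α → ℝ} (hr : ∀ a, 0 ≤ r a) {f : α → β} {g : α → γ}
    {μ : β → ℝ} {ν : γ → ℝ} (hμ : pmap f r = μ) (hν : pmap g r = ν) :
    KL r (fun a => μ (f a) * ν (g a)) = ent μ + ent ν - ent r := by
  subst hμ hν
  have hterm : ∀ a, r a * Real.log (r a / (pmap f r (f a) * pmap g r (g a)))
      = r a * Real.log (r a) - r a * Real.log (pmap f r (f a))
        - r a * Real.log (pmap g r (g a)) := by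
    intro a
    rcases (hr a).eq_or_lt with h | h
    · simp [← h]
    · have hf : 0 < pmap f r (f a) := h.trans_le (le_pmap_apply f hr a)
      have hg : 0 < pmap g r (g a) := h.trans_le (le_pmap_apply g hr a)
      rw [Real.log_div h.ne' (by positivity), Real.log_mul hf.ne' hg.ne']
      ring
  simp only [KL, hterm, Finset.sum_sub_distrib, sum_mul_log_pmap, Hof, ent]
  ring

lemma MI_eq_of_injective [Fintype γ] (r : α → ℝ) {f : α → β} {g : α → γ}
    (hfg : Function.Injective fun a => (f a, g a)) :
    MI r f g = Hof r f + Hof r g - ent r := by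
  rw [MI, Hof_of_injective hfg]

lemma MI_eq_of_pmap_eq [Fintype γ] {r s : α → ℝ} {f : α → β} {g : α → γ}
    (h : pmap (fun a => (f a, g a)) r = pmap (fun a => (f a, g a)) s) :
    MI r f g = MI s f g := by
  rw [MI, MI, Hof_eq_of_pmap_eq h, Hof_eq_of_pmap_eq (pmap_comp_of_pmap_eq Prod.fst h),
    Hof_eq_of_pmap_eq (pmap_comp_of_pmap_eq Prod.snd h)]

lemma MI_eq_KL [Fintype γ] {r : α → ℝ} (hr : ∀ a, 0 ≤ r a) (f : α → β) (g : α → γ) :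
    MI r f g = KL (pmap (fun a => (f a, g a)) r) (fun bc => pmap f r bc.1 * pmap g r bc.2) := by
  rw [KL_mul_marginals_eq (pmap_nonneg _ hr) (pmap_comp _ Prod.fst r) (pmap_comp _ Prod.snd r)]
  rfl

end Entropy

section DataProcessing

variable [Fintype α]

lemma sum_mul_log_div_nonneg {r w : α → ℝ} (hr : ∀ a, 0 ≤ r a) (hw : ∀ a, 0 ≤ w a)
    (hrw : ∀ a, 0 < r a → 0 < w a) (hsum : ∑ a, w a ≤ ∑ a, r a) :
    0 ≤ ∑ a, r a * Real.log (r a / w a) := by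
  have hterm : ∀ a, r a - w a ≤ r a * Real.log (r a / w a) := by
    intro a
    rcases (hr a).eq_or_lt with h | h
    · simp [← h, hw a]
    · have hlog := Real.one_sub_inv_le_log_of_pos (div_pos h (hrw a h))
      rw [inv_div] at hlog
      have : r a * (1 - w a / r a) = r a - w a := by field_simp
      nlinarith
  linarith [Finset.sum_le_sum fun a (_ : a ∈ Finset.univ) => hterm a, Finset.sum_sub_distrib
    (s := Finset.univ) (f := r) (g := w)]

lemma KL_pmap_le [Fintype β] (f : α → β) {μ ν : α → ℝ} (hμ : ∀ a, 0 ≤ μ a) (hν : ∀ a, 0 ≤ ν a)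
    (hμν : ∀ a, 0 < μ a → 0 < ν a) :
    KL (pmap f μ) (pmap f ν) ≤ KL μ ν := by
  -- Gibbs' inequality against `ν` reweighted by the likelihood ratio of the images
  set w : α → ℝ := fun a => ν a * (pmap f μ (f a) / pmap f ν (f a))
  have hterm : ∀ a, μ a * Real.log (μ a / ν a)
      - μ a * Real.log (pmap f μ (f a) / pmap f ν (f a)) = μ a * Real.log (μ a / w a) := by
    intro a
    rcases (hμ a).eq_or_lt with h | h
    · simp [← h]
    · have hν' := hμν a h
      have hFμ : 0 < pmap f μ (f a) := h.trans_le (le_pmap_apply f hμ a)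
      have hFν : 0 < pmap f ν (f a) := hν'.trans_le (le_pmap_apply f hν a)
      simp only [w]
      rw [Real.log_div h.ne' hν'.ne', Real.log_div h.ne' (by positivity),
        Real.log_mul hν'.ne' (by positivity)]
      ring
  have hw : ∀ a, 0 ≤ w a := fun a =>
    mul_nonneg (hν a) (div_nonneg (pmap_nonneg f hμ _) (pmap_nonneg f hν _))
  have hμw : ∀ a, 0 < μ a → 0 < w a := fun a h =>
    mul_pos (hμν a h) (div_pos (h.trans_le (le_pmap_apply f hμ a))
      ((hμν a h).trans_le (le_pmap_apply f hν a)))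
  have hsum : ∑ a, w a ≤ ∑ a, μ a := by
    rw [sum_pmap_mul f ν fun b => pmap f μ b / pmap f ν b, ← sum_pmap f μ]
    refine Finset.sum_le_sum fun b _ => ?_
    rcases (pmap_nonneg f hν b).eq_or_lt with h | h
    · simp [← h, pmap_nonneg f hμ b]
    · rw [mul_div_cancel₀ _ h.ne']
  have hgibbs := sum_mul_log_div_nonneg hμ hw hμw hsum
  rw [← Finset.sum_congr rfl fun a _ => hterm a, Finset.sum_sub_distrib] at hgibbs
  rw [KL, KL, ← sum_pmap_mul f μ fun b => Real.log (pmap f μ b / pmap f ν b)]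
  linarith

lemma MI_comp_le [Fintype β] [Fintype γ] {δ ε : Type*} [Fintype δ] [Fintype ε] {r : α → ℝ}
    (hr : ∀ a, 0 ≤ r a) (f : α → β) (g : α → γ) (s : β → δ) (t : γ → ε) :
    MI r (fun a => s (f a)) (fun a => t (g a)) ≤ MI r f g := by
  set P := pmap (fun a => (f a, g a)) r
  have hP : ∀ bc, 0 ≤ P bc := pmap_nonneg _ hr
  have hf : pmap Prod.fst P = pmap f r := pmap_comp _ _ r
  have hg : pmap Prod.snd P = pmap g r := pmap_comp _ _ r
  have hPf : ∀ bc, P bc ≤ pmap f r bc.1 := fun bc => hf ▸ le_pmap_apply Prod.fst hP bc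
  have hPg : ∀ bc, P bc ≤ pmap g r bc.2 := fun bc => hg ▸ le_pmap_apply Prod.snd hP bc
  have hst : pmap (fun a => (s (f a), t (g a))) r = pmap (Prod.map s t) P :=
    (pmap_comp (fun a => (f a, g a)) (Prod.map s t) r).symm
  rw [MI_eq_KL hr, MI_eq_KL hr, ← pmap_comp f s, ← pmap_comp g t, ← pmap_prodMap_mul, hst]
  exact KL_pmap_le _ hP (fun bc => mul_nonneg (pmap_nonneg f hr _) (pmap_nonneg g hr _))
    fun bc h => mul_pos (h.trans_le (hPf bc)) (h.trans_le (hPg bc))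

end DataProcessing

section MarkovChain

variable {𝒰 𝒳 𝒵 𝒱 : Type} [Fintype 𝒰] [Fintype 𝒳] [Fintype 𝒵] [Fintype 𝒱]
  {p : 𝒳 × 𝒵 → ℝ} {q : 𝒰 × 𝒳 × 𝒵 × 𝒱 → ℝ}

lemma LongMarkov.pmap_XZ (hq : LongMarkov p q) : pmap (fun w => (w.2.1, w.2.2.1)) q = p := by
  obtain ⟨a, b, -, ha, -, hb, hqf⟩ := hq
  funext ⟨x, z⟩
  simp [pmap, Fintype.sum_prod_type, hqf, ite_and, ← Finset.mul_sum, ← Finset.sum_mul, ha, hb]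

lemma pmap_UX_of_factor {a : 𝒳 → 𝒰 → ℝ} {b : 𝒵 → 𝒱 → ℝ} (hb : ∀ z, ∑ v, b z v = 1)
    (hq : ∀ u x z v, q (u, x, z, v) = a x u * p (x, z) * b z v) (u : 𝒰) (x : 𝒳) :
    pmap (fun w => (w.1, w.2.1)) q (u, x) = a x u * pmap Prod.fst p x := by
  rw [pmap_fst_apply]
  simp [pmap, Fintype.sum_prod_type, hq, ite_and, ← Finset.mul_sum, hb]

lemma pmap_ZV_of_factor {a : 𝒳 → 𝒰 → ℝ} {b : 𝒵 → 𝒱 → ℝ} (ha : ∀ x, ∑ u, a x u = 1)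
    (hq : ∀ u x z v, q (u, x, z, v) = a x u * p (x, z) * b z v) (z : 𝒵) (v : 𝒱) :
    pmap (fun w => (w.2.2.1, w.2.2.2)) q (z, v) = pmap Prod.snd p z * b z v := by
  rw [pmap_snd_apply]
  simp only [pmap, Fintype.sum_prod_type, hq, Prod.mk.injEq, ite_and, Finset.sum_ite_irrel,
    Finset.sum_const_zero, Finset.sum_ite_eq', Finset.mem_univ, if_true]
  rw [Finset.sum_comm]
  simp [← Finset.sum_mul, ha]

lemma LongMarkov.ent_eq (hp : ∀ xz, 0 ≤ p xz) (hq : LongMarkov p q) :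
    ent q = Hof q (fun w => (w.1, w.2.1)) + ent p + Hof q (fun w => (w.2.2.1, w.2.2.2))
      - ent (pmap Prod.fst p) - ent (pmap Prod.snd p) := by
  have hXZ := hq.pmap_XZ
  obtain ⟨a, b, -, ha1, -, hb1, hqf⟩ := hq
  have hterm : ∀ w, q w * Real.log (q w)
      = q w * Real.log (pmap (fun w => (w.1, w.2.1)) q (w.1, w.2.1))
        + q w * Real.log (p (w.2.1, w.2.2.1))
        + q w * Real.log (pmap (fun w => (w.2.2.1, w.2.2.2)) q (w.2.2.1, w.2.2.2))
        - q w * Real.log (pmap Prod.fst p w.2.1)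
        - q w * Real.log (pmap Prod.snd p w.2.2.1) := by
    rintro ⟨u, x, z, v⟩
    rw [pmap_UX_of_factor hb1 hqf, pmap_ZV_of_factor ha1 hqf, hqf]
    by_cases h : a x u * p (x, z) * b z v = 0
    · simp [h]
    obtain ⟨⟨hA, hP⟩, hB⟩ : (a x u ≠ 0 ∧ p (x, z) ≠ 0) ∧ b z v ≠ 0 := by
      simpa only [mul_ne_zero_iff] using h
    have hpos : 0 < p (x, z) := (hp _).lt_of_ne' hP
    have hX : pmap Prod.fst p x ≠ 0 := (hpos.trans_le (le_pmap_apply Prod.fst hp (x, z))).ne'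
    have hZ : pmap Prod.snd p z ≠ 0 := (hpos.trans_le (le_pmap_apply Prod.snd hp (x, z))).ne'
    rw [Real.log_mul (mul_ne_zero hA hP) hB, Real.log_mul hA hP, Real.log_mul hA hX,
      Real.log_mul hZ hB]
    ring
  have hX : ∑ w, q w * Real.log (pmap Prod.fst p w.2.1) = - ent (pmap Prod.fst p) := by
    rw [sum_pmap_mul (fun w => (w.2.1, w.2.2.1)) q fun xz => Real.log (pmap Prod.fst p xz.1), hXZ,
      sum_mul_log_pmap]
    rfl
  have hZ : ∑ w, q w * Real.log (pmap Prod.snd p w.2.2.1) = - ent (pmap Prod.snd p) := by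
    rw [sum_pmap_mul (fun w => (w.2.1, w.2.2.1)) q fun xz => Real.log (pmap Prod.snd p xz.2), hXZ,
      sum_mul_log_pmap]
    rfl
  have hP : ∑ w, q w * Real.log (p (w.2.1, w.2.2.1)) = - ent p := by
    rw [sum_pmap_mul (fun w => (w.2.1, w.2.2.1)) q fun xz => Real.log (p xz), hXZ, ent, neg_neg]
  rw [ent, Finset.sum_congr rfl fun w _ => hterm w]
  simp only [Finset.sum_add_distrib, Finset.sum_sub_distrib, sum_mul_log_pmap, hX, hZ, hP]
  ring

lemma marginal_matched_lhs_eq {qt : 𝒰 × 𝒳 × 𝒵 × 𝒱 → ℝ} (hp : ∀ xz, 0 ≤ p xz)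
    (hq : LongMarkov p q) (hqt : ∀ w, 0 ≤ qt w)
    (hUX : pmap (fun w => (w.1, w.2.1)) qt = pmap (fun w => (w.1, w.2.1)) q)
    (hZV : pmap (fun w => (w.2.2.1, w.2.2.2)) qt = pmap (fun w => (w.2.2.1, w.2.2.2)) q)
    (hUV : pmap (fun w => (w.1, w.2.2.2)) qt = pmap (fun w => (w.1, w.2.2.2)) q) :
    MI qt (fun w => (w.1, w.2.2.2)) (fun w => (w.2.1, w.2.2.1))
        - MI q (fun w => (w.1, w.2.2.2)) (fun w => (w.2.1, w.2.2.1))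
        + KL (pmap (fun w => (w.2.1, w.2.2.1)) qt)
            (fun xz => pmap Prod.fst p xz.1 * pmap Prod.snd p xz.2)
      = Hof q (fun w => (w.1, w.2.1)) + Hof q (fun w => (w.2.2.1, w.2.2.2)) - ent qt := by
  have hXZ := hq.pmap_XZ
  have hX : pmap Prod.fst (pmap (fun w => (w.2.1, w.2.2.1)) qt) = pmap Prod.fst p := by
    rw [pmap_comp, ← hXZ, pmap_comp]
    exact pmap_comp_of_pmap_eq Prod.snd hUX
  have hZ : pmap Prod.snd (pmap (fun w => (w.2.1, w.2.2.1)) qt) = pmap Prod.snd p := by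
    rw [pmap_comp, ← hXZ, pmap_comp]
    exact pmap_comp_of_pmap_eq Prod.fst hZV
  have hinj : Function.Injective fun w : 𝒰 × 𝒳 × 𝒵 × 𝒱 => ((w.1, w.2.2.2), (w.2.1, w.2.2.1)) := by
    rintro ⟨u, x, z, v⟩ ⟨u', x', z', v'⟩ h
    simp_all
  rw [MI_eq_of_injective qt hinj, MI_eq_of_injective q hinj, Hof_eq_of_pmap_eq hUV,
    KL_mul_marginals_eq (pmap_nonneg _ hqt) hX hZ, hq.ent_eq hp]
  unfold Hof
  rw [hXZ]
  ring

end MarkovChain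

/-- **Identity for marginal-matched tuples (key step in the proof of Theorem 2):**
let `q ~ (U, X, Z, V)` with `U – X – Z – V` and `(X,Z)`-marginal `p`, and let
`qt ~ (Ũ, X̃, Z̃, Ṽ)` match the `(U,X)`, `(V,Z)` and `(U,V)` marginals of `q`.  With
`q̄(u,x,z,v) = p_{UX}(u,x)·p_{ZV}(z,v)` (i.e. `Ū – X̄ – Z̄ – V̄` with `X̄ ⫫ Z̄`,
`(X̄,Ū) ~ (X,U)`, `(Z̄,V̄) ~ (Z,V)`), the quantity
`I_{q̃}((Ũ,Ṽ);(X̃,Z̃)) − I_q((U,V);(X,Z)) + D(p_{X̃Z̃} ‖ p_X ⊗ p_Z)` equals both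
`D(q̃ ‖ q̄)` and `I_{q̃}((X̃,Ũ);(Z̃,Ṽ))`, and is at least `I_q(U;V)`. -/
theorem marginal_matched_identity
    {𝒰 𝒳 𝒵 𝒱 : Type} [Fintype 𝒰] [Fintype 𝒳] [Fintype 𝒵] [Fintype 𝒱]
    (p : 𝒳 × 𝒵 → ℝ) (hp : IsPMF p)
    (q : 𝒰 × 𝒳 × 𝒵 × 𝒱 → ℝ) (hq : LongMarkov p q)
    (qt : 𝒰 × 𝒳 × 𝒵 × 𝒱 → ℝ) (hqt : IsPMF qt)
    (hUX : pmap (fun w => (w.1, w.2.1)) qt = pmap (fun w => (w.1, w.2.1)) q)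
    (hVZ : pmap (fun w => (w.2.2.2, w.2.2.1)) qt = pmap (fun w => (w.2.2.2, w.2.2.1)) q)
    (hUV : pmap (fun w => (w.1, w.2.2.2)) qt = pmap (fun w => (w.1, w.2.2.2)) q) :
    MI qt (fun w => (w.1, w.2.2.2)) (fun w => (w.2.1, w.2.2.1))
        - MI q (fun w => (w.1, w.2.2.2)) (fun w => (w.2.1, w.2.2.1))
        + KL (pmap (fun w => (w.2.1, w.2.2.1)) qt)
            (fun xz => pmap Prod.fst p xz.1 * pmap Prod.snd p xz.2)
      = KL qt (fun w => pmap (fun w' => (w'.1, w'.2.1)) q (w.1, w.2.1)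
                * pmap (fun w' => (w'.2.2.1, w'.2.2.2)) q (w.2.2.1, w.2.2.2)) ∧
    MI qt (fun w => (w.1, w.2.2.2)) (fun w => (w.2.1, w.2.2.1))
        - MI q (fun w => (w.1, w.2.2.2)) (fun w => (w.2.1, w.2.2.1))
        + KL (pmap (fun w => (w.2.1, w.2.2.1)) qt)
            (fun xz => pmap Prod.fst p xz.1 * pmap Prod.snd p xz.2)
      = MI qt (fun w => (w.2.1, w.1)) (fun w => (w.2.2.1, w.2.2.2)) ∧
    MI q (fun w => w.1) (fun w => w.2.2.2)
      ≤ MI qt (fun w => (w.1, w.2.2.2)) (fun w => (w.2.1, w.2.2.1))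
        - MI q (fun w => (w.1, w.2.2.2)) (fun w => (w.2.1, w.2.2.1))
        + KL (pmap (fun w => (w.2.1, w.2.2.1)) qt)
            (fun xz => pmap Prod.fst p xz.1 * pmap Prod.snd p xz.2) := by
  obtain ⟨hqt0, -⟩ := hqt
  have hZV : pmap (fun w => (w.2.2.1, w.2.2.2)) qt = pmap (fun w => (w.2.2.1, w.2.2.2)) q :=
    pmap_comp_of_pmap_eq Prod.swap hVZ
  have hlhs := marginal_matched_lhs_eq hp.1 hq hqt0 hUX hZV hUV
  have hinj : Function.Injective fun w : 𝒰 × 𝒳 × 𝒵 × 𝒱 => ((w.2.1, w.1), (w.2.2.1, w.2.2.2)) := by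
    rintro ⟨u, x, z, v⟩ ⟨u', x', z', v'⟩ h
    simp_all
  have hMI : MI qt (fun w => (w.2.1, w.1)) (fun w => (w.2.2.1, w.2.2.2))
      = Hof q (fun w => (w.1, w.2.1)) + Hof q (fun w => (w.2.2.1, w.2.2.2)) - ent qt := by
    rw [MI_eq_of_injective qt hinj, Hof_prod_comm, Hof_eq_of_pmap_eq hUX, Hof_eq_of_pmap_eq hZV]
  refine ⟨?_, hlhs.trans hMI.symm, ?_⟩
  · rw [hlhs, KL_mul_marginals_eq hqt0 hUX hZV]
    rfl
  · rw [hlhs, ← hMI, ← MI_eq_of_pmap_eq hUV]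
    exact MI_comp_le hqt0 (fun w => (w.2.1, w.1)) (fun w => (w.2.2.1, w.2.2.2)) Prod.snd Prod.snd

end Biclustering
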